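/- Let P(λ) = ∑_{k=0}^d λ^k P_k be an n×n matrix polynomial over a field F with even degree d = 2t (t ≥ 2), set Q(λ) := ∑_{k=0}^{d−1} λ^k P_k, and let λB+A be a pencil of size (t+1)n×(t+1)n with blocks M_{11}(λ) = −P_d, M_{12}(λ), M_{21}(λ), M_{22}(λ) (of sizes n×n, n×tn, tn×n, tn×tn) satisfying M_{12}(λ)(Λ_{t−1}(λ)⊗I_n) = λ^t P_d, (Λ_{t−1}(λ)^T⊗I_n)M_{21}(λ) = λ^t P_d, and (Λ_{t−1}(λ)^T⊗I_n)M_{22}(λ)(Λ_{t−1}(λ)⊗I_n) = Q(λ). Let L(λ) be the associated modified block Kronecker pencil with parameter σ ∈ {1,−1}. Then L(λ) · [Λ_t(λ)⊗I_n ; N̂_t(λ)(λB+A)(Λ_t(λ)⊗I_n)] = e_{t+1}⊗P(λ), i.e., the 2tn×n matrix polynomial obtained as this product has its (t+1)-th n×n block equal to P(λ) and all other blocks equal to 0 (e_{t+1} denotes the (t+1)-th column of I_{2t}). -/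

import Mathlib

open Polynomial Matrix
open scoped Kronecker

noncomputable section

/-- Entrywise inclusion of a constant matrix into polynomial matrices. -/
def matC {F : Type} [Field F] {m l : Type*} (M : Matrix m l F) : Matrix m l (Polynomial F) :=
  M.map fun a => (C a : Polynomial F)

/-- The pencil `λ ↦ A + λ B`, represented as a matrix over `F[λ]`. -/
def pencil {F : Type} [Field F] {m l : Type*} (A B : Matrix m l F) :
    Matrix m l (Polynomial F) :=
  matC A + (X : Polynomial F) • matC B

/-- Grade-`g` reversal `rev_g`, applied entrywise. -/
def revMat {F : Type} [Field F] {m l : Type*} (g : ℕ) (M : Matrix m l (Polynomial F)) :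
    Matrix m l (Polynomial F) :=
  M.map fun q => q.reflect g

/-- Entrywise evaluation of a polynomial matrix at a point. -/
def evalMat {F : Type} [Field F] {m l : Type*} (a : F) (M : Matrix m l (Polynomial F)) :
    Matrix m l F :=
  M.map fun q => q.eval a

/-- The matrix polynomial `P(λ) = ∑_{k=0}^d λ^k P_k` built from its coefficients. -/
def polyOfCoeffs {F : Type} [Field F] {n : ℕ} (d : ℕ) (Pc : ℕ → Matrix (Fin n) (Fin n) F) :
    Matrix (Fin n) (Fin n) (Polynomial F) :=
  ∑ k ∈ Finset.range (d + 1), (X : Polynomial F) ^ k • matC (Pc k)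

/-- The `(i,j)` block of a block-partitioned matrix. -/
def blk {α p q n m : Type*} (A : Matrix (p × n) (q × m) α) (i : p) (j : q) :
    Matrix n m α :=
  Matrix.of fun r c => A (i, r) (j, c)

/-- `Λ_s(λ) ⊗ I_n`, an `(s+1)n × n` polynomial matrix whose `i`-th block is `λ^{s-i} I_n`. -/
def Lam (F : Type) [Field F] (s n : ℕ) :
    Matrix (Fin (s+1) × Fin n) (Fin n) (Polynomial F) :=
  Matrix.of fun p c => if p.2 = c then (X : Polynomial F) ^ (s - (p.1 : ℕ)) else 0

/-- The pencil `L_s(λ) ∈ F[λ]^{s×(s+1)}` with `-1` on the diagonal and `λ` on the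
superdiagonal. -/
def Lpen (F : Type) [Field F] (s : ℕ) : Matrix (Fin s) (Fin (s+1)) (Polynomial F) :=
  Matrix.of fun i j =>
    if (j : ℕ) = (i : ℕ) then -1 else if (j : ℕ) = (i : ℕ) + 1 then X else 0

/-- The block Kronecker pencil `[[λB+A, L_s(λ)ᵀ⊗I_n],[σ L_s(λ)⊗I_n, 0]]` associated with a
pencil `M = λB+A` of size `(s+1)n × (s+1)n`. -/
def blockKron (F : Type) [Field F] (s n : ℕ) (σ : F)
    (M : Matrix (Fin (s+1) × Fin n) (Fin (s+1) × Fin n) (Polynomial F)) :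
    Matrix ((Fin (s+1) × Fin n) ⊕ (Fin s × Fin n)) ((Fin (s+1) × Fin n) ⊕ (Fin s × Fin n))
      (Polynomial F) :=
  Matrix.fromBlocks M (Lpen F s ⊗ₖ (1 : Matrix (Fin n) (Fin n) (Polynomial F)))ᵀ
    (σ • (Lpen F s ⊗ₖ (1 : Matrix (Fin n) (Fin n) (Polynomial F)))) 0

/-- `L` is a linearization of `P`: there are unimodular `U`, `V` with
`U L V = diag(I_m, P)` (up to the fixed identification of index sets). -/
def IsLinearization {F : Type} [Field F] (m : ℕ) {ι ρ : Type*} [Fintype ι] [DecidableEq ι]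
    [Fintype ρ] [DecidableEq ρ] (L : Matrix ι ι (Polynomial F))
    (P : Matrix ρ ρ (Polynomial F)) : Prop :=
  ∃ (e : (Fin m ⊕ ρ) ≃ ι) (U V : Matrix ι ι (Polynomial F)),
    IsUnit U.det ∧ IsUnit V.det ∧
      U * L * V =
        (Matrix.fromBlocks (1 : Matrix (Fin m) (Fin m) (Polynomial F)) 0 0 P).submatrix
          e.symm e.symm

/-- The block conditions `∑_{i+j=d+2-k} B_{ij} + ∑_{i+j=d+1-k} A_{ij} = P_k` for
`k = 0,…,d` (blocks are indexed here `0`-based, so `i+j` `1`-based is `i+j+2` `0`-based). -/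
def blockConds {F : Type} [Field F] {s n : ℕ} (d : ℕ) (Pc : ℕ → Matrix (Fin n) (Fin n) F)
    (A B : Matrix (Fin (s+1) × Fin n) (Fin (s+1) × Fin n) F) : Prop :=
  ∀ k, k ≤ d →
    (∑ p ∈ Finset.univ.filter
        (fun p : Fin (s+1) × Fin (s+1) => (p.1 : ℕ) + (p.2 : ℕ) + 2 + k = d + 2),
        blk B p.1 p.2) +
      (∑ p ∈ Finset.univ.filter
        (fun p : Fin (s+1) × Fin (s+1) => (p.1 : ℕ) + (p.2 : ℕ) + 2 + k = d + 1),
        blk A p.1 p.2) = Pc k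

/-- `L̂_t(λ) ⊗ I_n` (with `t = u+1`): first block column zero, remaining block columns
`L_{t-1}(λ) ⊗ I_n`; the column index is split as `Fin n ⊕ (Fin t × Fin n)`. -/
def LhatB (F : Type) [Field F] (u n : ℕ) :
    Matrix (Fin u × Fin n) (Fin n ⊕ Fin (u+1) × Fin n) (Polynomial F) :=
  Matrix.of fun p q =>
    match q with
    | Sum.inl _ => 0
    | Sum.inr c => (Lpen F u ⊗ₖ (1 : Matrix (Fin n) (Fin n) (Polynomial F))) p c

/-- The modified block Kronecker pencil `[[λB+A, L̂_t(λ)ᵀ⊗I_n],[σ L̂_t(λ)⊗I_n, 0]]`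
(with `t = u+1`). -/
def modBK (F : Type) [Field F] (u n : ℕ) (σ : F)
    (M : Matrix (Fin n ⊕ Fin (u+1) × Fin n) (Fin n ⊕ Fin (u+1) × Fin n) (Polynomial F)) :
    Matrix ((Fin n ⊕ Fin (u+1) × Fin n) ⊕ Fin u × Fin n)
      ((Fin n ⊕ Fin (u+1) × Fin n) ⊕ Fin u × Fin n) (Polynomial F) :=
  Matrix.fromBlocks M (LhatB F u n)ᵀ (σ • LhatB F u n) 0

/-- `Λ̂_t(λ) ⊗ I_n` (with `t = u+1`): the `(t+1)n × 2n` polynomial matrix whose transpose has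
block rows `(I_n, 0, …, 0)` and `(0, λ^{t-1}I_n, …, λ I_n, I_n)`. -/
def LamHatB (F : Type) [Field F] (u n : ℕ) :
    Matrix (Fin n ⊕ Fin (u+1) × Fin n) (Fin 2 × Fin n) (Polynomial F) :=
  Matrix.of fun q c =>
    match q with
    | Sum.inl r => if c.1 = 0 ∧ c.2 = r then 1 else 0
    | Sum.inr p => if c.1 = 1 ∧ c.2 = p.2 then (X : Polynomial F) ^ (u - (p.1 : ℕ)) else 0

/-- `Λ̃_t(λ) ⊗ I_n` (with `t = u+1`): the `(t+1)n × 2n` polynomial matrix whose transpose has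
block rows `(I_n, 0, …, 0)` and `(0, I_n, λ I_n, …, λ^{t-1} I_n)`. -/
def LamTildeB (F : Type) [Field F] (u n : ℕ) :
    Matrix (Fin n ⊕ Fin (u+1) × Fin n) (Fin 2 × Fin n) (Polynomial F) :=
  Matrix.of fun q c =>
    match q with
    | Sum.inl r => if c.1 = 0 ∧ c.2 = r then 1 else 0
    | Sum.inr p => if c.1 = 1 ∧ c.2 = p.2 then (X : Polynomial F) ^ (p.1 : ℕ) else 0

/-- A `2n × 2n` matrix assembled from four `n × n` blocks, indexed by `Fin 2 × Fin n`. -/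
def twoBlock {α : Type*} {n : ℕ} (W₁₁ W₁₂ W₂₁ W₂₂ : Matrix (Fin n) (Fin n) α) :
    Matrix (Fin 2 × Fin n) (Fin 2 × Fin n) α :=
  Matrix.of fun p q =>
    if p.1 = 0 then (if q.1 = 0 then W₁₁ p.2 q.2 else W₁₂ p.2 q.2)
    else (if q.1 = 0 then W₂₁ p.2 q.2 else W₂₂ p.2 q.2)

/-- `Λ_t(λ) ⊗ I_n` (with `t = u+1`), over the split row index `Fin n ⊕ (Fin t × Fin n)`:
block entries `λ^t I_n, λ^{t-1} I_n, …, λ I_n, I_n`. -/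
def LamFullB (F : Type) [Field F] (u n : ℕ) :
    Matrix (Fin n ⊕ Fin (u+1) × Fin n) (Fin n) (Polynomial F) :=
  Matrix.of fun q c =>
    match q with
    | Sum.inl r => if r = c then (X : Polynomial F) ^ (u + 1) else 0
    | Sum.inr p => if p.2 = c then (X : Polynomial F) ^ (u - (p.1 : ℕ)) else 0

/-- `N̂_t(λ) = Ĥ_t(λ) ⊗ I_n` (with `t = u+1`): `Ĥ_t ∈ F[λ]^{(t-1)×(t+1)}` has `(i,j)` entry
`λ^{i+1-j}` if `2 ≤ j ≤ i+1` and `0` otherwise. -/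
def NhatB (F : Type) [Field F] (u n : ℕ) :
    Matrix (Fin u × Fin n) (Fin n ⊕ Fin (u+1) × Fin n) (Polynomial F) :=
  Matrix.of fun p q =>
    match q with
    | Sum.inl _ => 0
    | Sum.inr c =>
        if (c.1 : ℕ) ≤ (p.1 : ℕ) ∧ p.2 = c.2 then
          (X : Polynomial F) ^ ((p.1 : ℕ) - (c.1 : ℕ)) else 0

end

/-!
Write `M = λB + A` and `W := λ^t M₂₁ + M₂₂ (Λ_{t-1} ⊗ I_n)`. The conditions on `M₁₁` and `M₁₂`
make the first block row of `M (Λ_t ⊗ I_n)` vanish, so `M (Λ_t ⊗ I_n) = [0; W]`, and the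
conditions on `M₂₁` and `M₂₂` give `(Λ_{t-1}ᵀ ⊗ I_n) W = λ^{2t} P_d + Q(λ) = P(λ)`.
The bottom block row of `L(λ)` kills `Λ_t ⊗ I_n` because `L_{t-1} Λ_{t-1} = 0`. In the top
block row, `N̂_t` only sees `W`, and the identity `I_t + L_{t-1}ᵀ Ĥ' = e_t Λ_{t-1}ᵀ`
(with `Ĥ'` the last `t` columns of `Ĥ_t`) collapses `W + (L_{t-1}ᵀ Ĥ' ⊗ I_n) W` to
`e_t ⊗ (Λ_{t-1}ᵀ ⊗ I_n) W = e_t ⊗ P(λ)`.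
-/

noncomputable def lamVec (F : Type) [Field F] (s : ℕ) : Fin (s+1) → Polynomial F :=
  fun k => X ^ (s - (k : ℕ))

/-- `Ĥ_{s+1}` with its zero first column removed. -/
noncomputable def Hmat (F : Type) [Field F] (s : ℕ) :
    Matrix (Fin s) (Fin (s+1)) (Polynomial F) :=
  Matrix.of fun i k => if (k : ℕ) ≤ (i : ℕ) then X ^ ((i : ℕ) - (k : ℕ)) else 0

theorem kronecker_one_mul_apply {R : Type*} [NonAssocSemiring R] {l m n o : Type*} [Fintype m]
    [Fintype n] [DecidableEq n] (A : Matrix l m R) (W : Matrix (m × n) o R) (i : l) (r : n)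
    (c : o) : ((A ⊗ₖ (1 : Matrix n n R)) * W) (i, r) c = ∑ k, A i k * W (k, r) c := by
  simp [mul_apply, Fintype.sum_prod_type, one_apply]

theorem Fin.sum_ite_val_eq {M : Type*} [AddCommMonoid M] (s m : ℕ) (f : ℕ → M) :
    ∑ i : Fin s, (if (i : ℕ) = m then f i else 0) = if m < s then f m else 0 := by
  rw [Fin.sum_univ_eq_sum_range (fun i => if i = m then f i else 0), Finset.sum_ite_eq']
  simp

section Pencils

variable {F : Type} [Field F]

theorem transpose_Lam_mul_apply {s n : ℕ} {o : Type*}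
    (W : Matrix (Fin (s+1) × Fin n) o (Polynomial F)) (r : Fin n) (c : o) :
    ((Lam F s n)ᵀ * W) r c = ∑ k, lamVec F s k * W (k, r) c := by
  simp [mul_apply, Fintype.sum_prod_type, Lam, lamVec]

theorem Lpen_row {s : ℕ} (i : Fin s) :
    Lpen F s i = X • Pi.single i.succ 1 - Pi.single i.castSucc 1 := by
  funext j
  simp only [Lpen, of_apply, Pi.sub_apply, Pi.smul_apply, Pi.single_apply, Fin.ext_iff,
    Fin.val_castSucc, Fin.val_succ, smul_eq_mul]
  split_ifs <;> first | omega | simp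

theorem Lpen_mulVec_apply {s : ℕ} (v : Fin (s+1) → Polynomial F)
    (i : Fin s) : (Lpen F s *ᵥ v) i = X * v i.succ - v i.castSucc := by
  change Lpen F s i ⬝ᵥ v = _
  rw [Lpen_row, sub_dotProduct, smul_dotProduct, single_dotProduct, single_dotProduct, one_mul,
    one_mul, smul_eq_mul]

theorem Lpen_mulVec_lamVec (s : ℕ) : Lpen F s *ᵥ lamVec F s = 0 := by
  funext i
  rw [Lpen_mulVec_apply, lamVec, lamVec, Fin.val_succ, Fin.val_castSucc, ← pow_succ',
    Pi.zero_apply, sub_eq_zero]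
  congr 1
  omega

theorem Lpen_kronecker_one_mul_Lam (s n : ℕ) :
    (Lpen F s ⊗ₖ (1 : Matrix (Fin n) (Fin n) (Polynomial F))) * Lam F s n = 0 := by
  ext ⟨i, r⟩ c : 1
  have h := congrFun (Lpen_mulVec_lamVec (F := F) s) i
  simp only [mulVec, dotProduct, lamVec] at h
  by_cases hrc : r = c <;> simp [kronecker_one_mul_apply, Lam, hrc, h]

theorem vecMulVec_lamVec_kronecker_one_mul {s n : ℕ} {o : Type*}
    (a : Fin (s+1) → Polynomial F) (W : Matrix (Fin (s+1) × Fin n) o (Polynomial F)) :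
    (vecMulVec a (lamVec F s) ⊗ₖ (1 : Matrix (Fin n) (Fin n) (Polynomial F))) * W =
      Matrix.of fun p c => a p.1 * ((Lam F s n)ᵀ * W) p.2 c := by
  ext ⟨j, r⟩ c : 1
  simp only [kronecker_one_mul_apply, transpose_Lam_mul_apply, vecMulVec_apply, of_apply,
    Finset.mul_sum, mul_assoc]

theorem one_add_transpose_Lpen_mul_Hmat (s : ℕ) :
    1 + (Lpen F s)ᵀ * Hmat F s = vecMulVec (Pi.single (Fin.last s) 1) (lamVec F s) := by
  ext j k : 1
  have hterm : ∀ i : Fin s, (Lpen F s)ᵀ j i * Hmat F s i k =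
      (if (i : ℕ) = (j : ℕ) - 1 then
        (if 0 < (j : ℕ) ∧ (k : ℕ) < j then X ^ ((j : ℕ) - k) else 0) else 0) -
      (if (i : ℕ) = j then (if (k : ℕ) ≤ j then X ^ ((j : ℕ) - k) else 0) else 0) := by
    intro i
    simp only [transpose_apply, Lpen, Hmat, of_apply]
    split_ifs <;> (try simp) <;> first | omega | (congr 1; omega) |
      (rw [← pow_succ']; congr 1; omega)
  simp only [Matrix.add_apply, mul_apply, hterm, Finset.sum_sub_distrib]
  rw [Fin.sum_ite_val_eq s ((j : ℕ) - 1) (fun _ => _), Fin.sum_ite_val_eq s j (fun _ => _),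
    one_apply, vecMulVec_apply, Pi.single_apply, lamVec]
  simp only [Fin.ext_iff, Fin.val_last]
  split_ifs <;> (try simp) <;> first | omega | (congr 1; omega) |
    (rw [Nat.sub_eq_zero_of_le (by omega : (j : ℕ) ≤ k)]; simp) |
    (rw [Nat.sub_eq_zero_of_le (by omega : s ≤ (k : ℕ))]; simp)

theorem LhatB_eq_fromCols (u n : ℕ) :
    LhatB F u n = fromCols 0 (Lpen F u ⊗ₖ (1 : Matrix (Fin n) (Fin n) (Polynomial F))) := by
  ext p (c | c) : 1 <;> rfl

theorem NhatB_eq_fromCols (u n : ℕ) :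
    NhatB F u n = fromCols 0 (Hmat F u ⊗ₖ (1 : Matrix (Fin n) (Fin n) (Polynomial F))) := by
  ext p (c | c) : 1
  · rfl
  · by_cases h1 : (c.1 : ℕ) ≤ p.1 <;> by_cases h2 : p.2 = c.2 <;>
      simp [NhatB, Hmat, one_apply, h1, h2]

theorem LamFullB_eq_fromRows (u n : ℕ) :
    LamFullB F u n =
      fromRows ((X : Polynomial F) ^ (u+1) • (1 : Matrix (Fin n) (Fin n) (Polynomial F)))
        (Lam F u n) := by
  ext (r | p) c : 1
  · by_cases h : r = c <;> simp [LamFullB, one_apply, h]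
  · rfl

theorem modBK_mul_fromRows_LamFullB {u n : ℕ} (σ : F)
    (M : Matrix (Fin n ⊕ Fin (u+1) × Fin n) (Fin n ⊕ Fin (u+1) × Fin n) (Polynomial F))
    (W : Matrix (Fin (u+1) × Fin n) (Fin n) (Polynomial F))
    (hM : M * LamFullB F u n = fromRows 0 W) :
    modBK F u n σ M * fromRows (LamFullB F u n) (NhatB F u n * M * LamFullB F u n) =
      fromRows (fromRows 0
        (Matrix.of fun p c => if p.1 = Fin.last u then ((Lam F u n)ᵀ * W) p.2 c else 0)) 0 := by
  have hbot : σ • LhatB F u n * LamFullB F u n = 0 := by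
    rw [smul_mul, LhatB_eq_fromCols, LamFullB_eq_fromRows, fromCols_mul_fromRows,
      Matrix.zero_mul, zero_add, Lpen_kronecker_one_mul_Lam, smul_zero]
  have htop : M * LamFullB F u n + (LhatB F u n)ᵀ * (NhatB F u n * M * LamFullB F u n) =
      fromRows 0
        ((1 + (Lpen F u)ᵀ * Hmat F u) ⊗ₖ (1 : Matrix (Fin n) (Fin n) (Polynomial F)) * W) := by
    rw [Matrix.mul_assoc, hM, NhatB_eq_fromCols, LhatB_eq_fromCols, fromCols_mul_fromRows,
      Matrix.zero_mul, zero_add, transpose_fromCols, fromRows_mul, transpose_zero,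
      Matrix.zero_mul, ← Matrix.mul_assoc, ← kroneckerMap_transpose, transpose_one,
      ← mul_kronecker_mul, one_mul, add_kronecker, one_kronecker_one, Matrix.add_mul,
      Matrix.one_mul]
    ext (i | i) c : 1 <;> simp
  rw [modBK, fromBlocks_mul_fromRows, htop, hbot, Matrix.zero_mul, add_zero,
    one_add_transpose_Lpen_mul_Hmat, vecMulVec_lamVec_kronecker_one_mul]
  congr 2
  ext ⟨j, r⟩ c : 1
  by_cases hj : j = Fin.last u <;> simp [hj]

end Pencils

theorem stmt_16 {F : Type} [Field F] (n u : ℕ)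
    (Pc : ℕ → Matrix (Fin n) (Fin n) F)
    (σ : F)
    (A B : Matrix (Fin n ⊕ Fin (u+1) × Fin n) (Fin n ⊕ Fin (u+1) × Fin n) F)
    (h11 : (pencil A B).toBlocks₁₁ = -(matC (Pc (2*(u+1)))))
    (h12 : (pencil A B).toBlocks₁₂ * Lam F u n =
      (X : Polynomial F) ^ (u+1) • matC (Pc (2*(u+1))))
    (h21 : (Lam F u n)ᵀ * (pencil A B).toBlocks₂₁ =
      (X : Polynomial F) ^ (u+1) • matC (Pc (2*(u+1))))
    (h22 : (Lam F u n)ᵀ * (pencil A B).toBlocks₂₂ * Lam F u n =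
      ∑ k ∈ Finset.range (2*(u+1)), (X : Polynomial F) ^ k • matC (Pc k)) :
    modBK F u n σ (pencil A B) *
        Matrix.fromRows (LamFullB F u n) (NhatB F u n * pencil A B * LamFullB F u n) =
      Matrix.of fun q c =>
        match q with
        | Sum.inl (Sum.inr p) =>
            if p.1 = Fin.last u then polyOfCoeffs (2*(u+1)) Pc p.2 c else 0
        | Sum.inl (Sum.inl _) => 0
        | Sum.inr _ => 0 := by
  set M := pencil A B
  set W := (X : Polynomial F) ^ (u+1) • M.toBlocks₂₁ + M.toBlocks₂₂ * Lam F u n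
  have hMW : M * LamFullB F u n = fromRows 0 W := by
    rw [← fromBlocks_toBlocks M, LamFullB_eq_fromRows, fromBlocks_mul_fromRows, h11, h12,
      Matrix.mul_smul, Matrix.mul_smul, Matrix.mul_one, Matrix.mul_one, smul_neg, neg_add_cancel]
  have hP : (Lam F u n)ᵀ * W = polyOfCoeffs (2*(u+1)) Pc := by
    rw [Matrix.mul_add, Matrix.mul_smul, h21, smul_smul, ← pow_add, ← Matrix.mul_assoc, h22,
      polyOfCoeffs, Finset.sum_range_succ, add_comm, two_mul]
  rw [modBK_mul_fromRows_LamFullB σ M W hMW, hP]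
  ext ((_ | _) | _) _ : 1 <;> rfl
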